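/- arXiv:1903.01844 — 2 statements merged into one kernel-verified Lean document; each statement's English description precedes it below -/
import Mathlib

section
/- If s = 5k+2 or s = 5k-2 for some integer k, then γ̄(ℤ, {1, -1, s, -s}) = 1/5. -/
open Filter

open scoped Classical in
noncomputable def lowerDensity (U : Set ℤ) : ℝ :=
  Filter.liminf (fun n : ℕ =>
    (((Finset.Icc (-(n:ℤ)) (n:ℤ)).filter (fun m => m ∈ U)).card : ℝ) / (2*(n:ℝ)+1))
    Filter.atTop

/-- `D` is a dominating set of the Cayley digraph `Γ(ℤ, S)`. -/
def IsDominating (S D : Set ℤ) : Prop :=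
  ∀ v : ℤ, v ∈ D ∨ ∃ u ∈ D, ∃ s ∈ S, v = u + s

/-- The domination ratio of `Γ(ℤ, S)`. -/
noncomputable def domRatio (S : Set ℤ) : ℝ :=
  sInf {x : ℝ | ∃ D : Set ℤ, IsDominating S D ∧ x = lowerDensity D}

/-!
Every vertex dominates itself and its `|S|` translates, so a dominating set `D` of `Γ(ℤ, S)` must
meet the window `[-n, n]` in at least `(2n + 1 - 2M) / (|S| + 1)` points, where `M` bounds `|t|`
on `S`: every integer of `[-n + M, n - M]` is dominated from inside `[-n, n]`. Hence
`γ̄(ℤ, {±1, ±s}) ≥ 1/5`. Conversely, when `s ≡ ±2 (mod 5)` the residues `0, ±1, ±s` exhaust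
`ℤ/5`, so the multiples of `5`, of density `1/5`, dominate.
-/

open Topology

-- `lowerDensity U` unfolds to the liminf of `windowCount U n / (2n + 1)`.
open scoped Classical in
noncomputable def windowCount (U : Set ℤ) (n : ℕ) : ℕ :=
  ((Finset.Icc (-(n:ℤ)) n).filter (· ∈ U)).card

lemma windowCount_le (U : Set ℤ) (n : ℕ) : windowCount U n ≤ 2 * n + 1 := by
  classical
  calc windowCount U n ≤ (Finset.Icc (-(n:ℤ)) n).card := Finset.card_filter_le _ _
    _ = 2 * n + 1 := by rw [Int.card_Icc]; omega

lemma tendsto_const_div_two_mul_add_one (C : ℝ) :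
    Tendsto (fun n : ℕ => C / (2 * n + 1)) atTop (𝓝 0) :=
  tendsto_const_nhds.div_atTop <|
    tendsto_atTop_add_const_right _ _ <| (tendsto_natCast_atTop_atTop).const_mul_atTop two_pos

lemma le_lowerDensity_of_eventually {U : Set ℤ} {L C : ℝ}
    (h : ∀ᶠ n : ℕ in atTop, (2 * n + 1) * L - C ≤ windowCount U n) : L ≤ lowerDensity U := by
  have hlim : Tendsto (fun n : ℕ => L - C / (2 * n + 1)) atTop (𝓝 L) := by
    simpa using tendsto_const_nhds.sub (tendsto_const_div_two_mul_add_one C)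
  have hle : ∀ᶠ n : ℕ in atTop, L - C / (2 * n + 1) ≤ (windowCount U n : ℝ) / (2 * n + 1) := by
    filter_upwards [h] with n hn
    rw [sub_le_iff_le_add, ← add_div, le_div_iff₀ (by positivity)]
    linarith
  have hbdd : IsCoboundedUnder (· ≥ ·) atTop
      (fun n : ℕ => (windowCount U n : ℝ) / (2 * n + 1)) := by
    refine isCoboundedUnder_ge_of_le atTop (x := 1) fun n => ?_
    rw [div_le_one (by positivity)]
    exact_mod_cast windowCount_le U n
  calc L = liminf (fun n : ℕ => L - C / (2 * n + 1)) atTop := hlim.liminf_eq.symm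
    _ ≤ lowerDensity U := liminf_le_liminf hle hlim.isBoundedUnder_ge hbdd

lemma lowerDensity_eq_of_abs_sub_le {U : Set ℤ} {L C : ℝ}
    (h : ∀ n : ℕ, |windowCount U n - (2 * n + 1) * L| ≤ C) : lowerDensity U = L := by
  have hlim : Tendsto (fun n : ℕ => (windowCount U n : ℝ) / (2 * n + 1)) atTop (𝓝 L) := by
    rw [tendsto_iff_norm_sub_tendsto_zero]
    refine squeeze_zero (fun _ => norm_nonneg _) (fun n => ?_)
      (tendsto_const_div_two_mul_add_one C)
    have hpos : (0:ℝ) < 2 * n + 1 := by positivity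
    rw [Real.norm_eq_abs, div_sub' hpos.ne', abs_div, abs_of_pos hpos]
    exact div_le_div_of_nonneg_right (h n) hpos.le
  exact hlim.liminf_eq

lemma windowCount_multiples (q n : ℕ) (hq : 0 < q) :
    windowCount {m : ℤ | (q:ℤ) ∣ m} n = 2 * (n / q) + 1 := by
  have hq' : (0:ℤ) < q := by exact_mod_cast hq
  have himage : windowCount {m : ℤ | (q:ℤ) ∣ m} n
      = ((Finset.Icc (-((n / q : ℕ) : ℤ)) ((n / q : ℕ) : ℤ)).image ((q:ℤ) * ·)).card := by
    unfold windowCount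
    congr 1
    ext m
    simp only [Finset.mem_filter, Finset.mem_Icc, Set.mem_ofPred_eq, Finset.mem_image]
    constructor
    · rintro ⟨hm, j, rfl⟩
      refine ⟨j, ?_, rfl⟩
      push_cast
      rw [neg_le, Int.le_ediv_iff_mul_le hq', Int.le_ediv_iff_mul_le hq']
      constructor <;> linarith
    · rintro ⟨j, hj, rfl⟩
      push_cast at hj
      rw [neg_le, Int.le_ediv_iff_mul_le hq', Int.le_ediv_iff_mul_le hq'] at hj
      exact ⟨⟨by linarith, by linarith⟩, dvd_mul_right _ _⟩
  rw [himage, Finset.card_image_of_injective _ (mul_right_injective₀ hq'.ne'), Int.card_Icc]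
  omega

lemma lowerDensity_multiples (q : ℕ) (hq : 0 < q) :
    lowerDensity {m : ℤ | (q:ℤ) ∣ m} = 1 / q := by
  refine lowerDensity_eq_of_abs_sub_le (C := 1) fun n => ?_
  have hq' : (0:ℝ) < q := by exact_mod_cast hq
  have hlow : (n / q : ℕ) * (q:ℝ) ≤ n := by exact_mod_cast Nat.div_mul_le_self n q
  have hhigh : (n:ℝ) + 1 ≤ (n / q : ℕ) * q + q := by
    exact_mod_cast Nat.lt_div_mul_add (a := n) hq
  rw [windowCount_multiples q n hq, mul_one_div, sub_div' hq'.ne', abs_div, abs_of_pos hq',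
    div_le_one hq', abs_le]
  push_cast
  constructor <;> linarith

lemma IsDominating.exists_sub_mem {S D : Set ℤ} (hD : IsDominating S D) (v : ℤ) :
    ∃ u ∈ D, v - u ∈ insert 0 S := by
  rcases hD v with hv | ⟨u, hu, t, ht, rfl⟩
  · exact ⟨v, hv, by simp⟩
  · exact ⟨u, hu, by simp [ht]⟩

lemma IsDominating.two_mul_add_one_sub_le {S : Finset ℤ} {D : Set ℤ} (hD : IsDominating S D)
    {M : ℤ} (hM₀ : 0 ≤ M) (hM : ∀ t ∈ S, |t| ≤ M) (n : ℕ) :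
    2 * n + 1 - 2 * M ≤ (S.card + 1) * (windowCount D n : ℤ) := by
  classical
  choose f hfD hf using hD.exists_sub_mem
  have hmaps : ∀ v ∈ Finset.Icc (-n + M) (n - M),
      f v ∈ (Finset.Icc (-(n:ℤ)) n).filter (· ∈ D) := by
    intro v hv
    have hclose : |v - f v| ≤ M := by
      rcases Finset.mem_insert.mp (by exact_mod_cast hf v) with h | h
      · simpa [h] using hM₀
      · exact hM _ h
    simp only [Finset.mem_filter, Finset.mem_Icc] at hv ⊢
    refine ⟨⟨?_, ?_⟩, hfD v⟩ <;> linarith [abs_le.mp hclose]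
  have hfiber : ∀ u ∈ (Finset.Icc (-(n:ℤ)) n).filter (· ∈ D),
      ((Finset.Icc (-n + M) (n - M)).filter (f · = u)).card ≤ S.card + 1 := by
    intro u _
    calc ((Finset.Icc (-n + M) (n - M)).filter (f · = u)).card
        ≤ ((insert 0 S).image (u + ·)).card := by
          refine Finset.card_le_card fun v hv => ?_
          obtain ⟨-, rfl⟩ := Finset.mem_filter.mp hv
          exact Finset.mem_image.mpr ⟨v - f v, by exact_mod_cast hf v, by ring⟩
      _ ≤ (insert 0 S).card := Finset.card_image_le
      _ ≤ S.card + 1 := Finset.card_insert_le _ _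
  have hcount := Finset.card_le_mul_card_image_of_maps_to hmaps _ hfiber
  rw [Int.card_Icc] at hcount
  have hcount' := (Int.self_le_toNat _).trans (Int.ofNat_le.mpr hcount)
  push_cast at hcount'
  unfold windowCount
  linarith

lemma IsDominating.one_div_card_add_one_le_lowerDensity {S : Finset ℤ} {D : Set ℤ}
    (hD : IsDominating S D) : 1 / (S.card + 1 : ℝ) ≤ lowerDensity D := by
  set M : ℤ := ∑ t ∈ S, |t|
  have hcount := hD.two_mul_add_one_sub_le (Finset.sum_nonneg fun t _ => abs_nonneg t)
    (fun t ht => Finset.single_le_sum (fun t _ => abs_nonneg t) ht)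
  refine le_lowerDensity_of_eventually (C := 2 * M / (S.card + 1))
    (Eventually.of_forall fun n => ?_)
  have hpos : (0:ℝ) < S.card + 1 := by positivity
  rw [mul_one_div, ← sub_div, div_le_iff₀ hpos]
  exact_mod_cast (hcount n).trans_eq (mul_comm _ _)

lemma isDominating_multiples_five {s : ℤ} (hs : s % 5 = 2 ∨ s % 5 = 3) :
    IsDominating {1, -1, s, -s} {m : ℤ | 5 ∣ m} := by
  intro v
  have hres : 5 ∣ v ∨ 5 ∣ v - 1 ∨ 5 ∣ v + 1 ∨ 5 ∣ v - s ∨ 5 ∣ v + s := by omega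
  rcases hres with h | h | h | h | h
  · exact Or.inl h
  · exact Or.inr ⟨v - 1, h, 1, by simp, by ring⟩
  · exact Or.inr ⟨v + 1, h, -1, by simp, by ring⟩
  · exact Or.inr ⟨v - s, h, s, by simp, by ring⟩
  · exact Or.inr ⟨v + s, h, -s, by simp, by ring⟩

theorem stmt_14 (s k : ℤ) (hs : s = 5*k + 2 ∨ s = 5*k - 2) :
    domRatio {1, -1, s, -s} = 1/5 := by
  have hres : s % 5 = 2 ∨ s % 5 = 3 := by omega
  refine IsLeast.csInf_eq ⟨⟨_, isDominating_multiples_five hres, ?_⟩, ?_⟩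
  · exact_mod_cast (lowerDensity_multiples 5 (by norm_num)).symm
  rintro _ ⟨D, hD, rfl⟩
  have hcard : (({1, -1, s, -s} : Finset ℤ).card + 1 : ℝ) ≤ 5 := by
    exact_mod_cast Nat.add_le_add_right Finset.card_le_four 1
  calc (1:ℝ) / 5 ≤ 1 / (({1, -1, s, -s} : Finset ℤ).card + 1) :=
        one_div_le_one_div_of_le (by positivity) hcard
    _ ≤ lowerDensity D := IsDominating.one_div_card_add_one_le_lowerDensity (by simpa using hD)
end

section
/- For any integer k ≥ 1, γ̄(ℤ, {1, 3k+1}) = (k+1)/(3k+2). -/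
open Filter

/-!
Write `p = 3k + 2`. The integers congruent modulo `p` to one of `0, 3, …, 3k` dominate
`Γ(ℤ, {1, p - 1})` and have density `(k + 1) / p`.

Conversely, let `D` dominate, so every `v` has `v`, `v - 1` or `v - (p - 1)` in `D`. Below any
`y` there is a window `[y - L, y)` with `L ≤ 6k + 1` in which `D` has relative density at least
`(k + 1) / p`: take `L = 2` if `y - 1` or `y - 2` lies in `D`; otherwise `y - p ∈ D`, and
`L = p` works unless `μ := |D ∩ [y - 3k - 1, y)| < k`. In that case at most `2μ` points of
`[y - 3k, y)` are dominated from `[y - 3k - 1, y)`, the others from `[y - 6k - 1, y - 3k - 1)`,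
so `[y - 6k - 1, y)` holds at least `3k - μ ≥ 2k + 1` points of `D` and `L = 6k + 1` works.
Cutting a long interval into such windows from the right gives
`|D ∩ [-n, n]| ≥ (k + 1)(2n + 1) / p - O(k)`.
-/

open Filter Topology
open scoped Classical

noncomputable def countIco (D : Set ℤ) (a b : ℤ) : ℕ :=
  ((Finset.Ico a b).filter (· ∈ D)).card

section countIco

variable {D : Set ℤ}

lemma countIco_add {a b c : ℤ} (hab : a ≤ b) (hbc : b ≤ c) :
    countIco D a c = countIco D a b + countIco D b c := by
  rw [countIco, ← Finset.Ico_union_Ico_eq_Ico hab hbc, Finset.filter_union,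
    Finset.card_union_of_disjoint]
  · rfl
  · exact (Finset.Ico_disjoint_Ico_consecutive a b c).mono
      (Finset.filter_subset _ _) (Finset.filter_subset _ _)

lemma countIco_mono {a b a' b' : ℤ} (ha : a' ≤ a) (hb : b ≤ b') :
    countIco D a b ≤ countIco D a' b' :=
  Finset.card_le_card (Finset.filter_subset_filter _ (Finset.Ico_subset_Ico ha hb))

lemma countIco_le (a b : ℤ) : countIco D a b ≤ (b - a).toNat :=
  (Finset.card_filter_le _ _).trans (Int.card_Ico a b).le

lemma one_le_countIco {a b x : ℤ} (hx : x ∈ D) (hax : a ≤ x) (hxb : x < b) :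
    1 ≤ countIco D a b :=
  Finset.card_pos.mpr ⟨x, Finset.mem_filter.mpr ⟨Finset.mem_Ico.mpr ⟨hax, hxb⟩, hx⟩⟩

lemma card_filter_Ico_le_countIco {P : ℤ → Prop} {a b t : ℤ}
    (h : ∀ v, P v → v - t ∈ D) :
    ((Finset.Ico a b).filter P).card ≤ countIco D (a - t) (b - t) := by
  refine Finset.card_le_card_of_injOn (· - t) (fun v hv => ?_) (fun _ _ _ _ => by simp)
  simp only [Finset.coe_filter, Finset.mem_Ico, Set.mem_ofPred_eq] at hv
  simp only [Finset.coe_filter, Finset.mem_Ico, Set.mem_ofPred_eq]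
  exact ⟨⟨by linarith [hv.1.1], by linarith [hv.1.2]⟩, h v hv.2⟩

end countIco

lemma IsDominating.mem_or_sub_one_mem_or_sub_mem {s : ℤ} {D : Set ℤ}
    (hD : IsDominating {1, s} D) (v : ℤ) : v ∈ D ∨ v - 1 ∈ D ∨ v - s ∈ D := by
  rcases hD v with h | ⟨u, hu, t, ht | ht, rfl⟩
  · exact .inl h
  · subst ht; simpa using Or.inr (Or.inl hu)
  · rw [Set.mem_singleton_iff] at ht; subst ht; simpa using Or.inr (Or.inr hu)

lemma IsDominating.sub_le_countIco {s : ℤ} {D : Set ℤ} (hD : IsDominating {1, s} D)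
    {a b : ℤ} (hab : a ≤ b) :
    b - a ≤ countIco D a b + countIco D (a - 1) (b - 1) + countIco D (a - s) (b - s) := by
  let A := Finset.Ico a b
  have hcover :
      A ⊆ A.filter (· ∈ D) ∪ A.filter (· - 1 ∈ D) ∪ A.filter (· - s ∈ D) := by
    intro v hv
    have := hD.mem_or_sub_one_mem_or_sub_mem v
    simp only [Finset.mem_union, Finset.mem_filter]
    tauto
  have hcard := (Finset.card_le_card hcover).trans (Finset.card_union_le _ _)
  have hcard' := Finset.card_union_le (A.filter (· ∈ D)) (A.filter (· - 1 ∈ D))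
  have h1 : (A.filter (· - 1 ∈ D)).card ≤ countIco D (a - 1) (b - 1) :=
    card_filter_Ico_le_countIco fun _ h => h
  have hs : (A.filter (· - s ∈ D)).card ≤ countIco D (a - s) (b - s) :=
    card_filter_Ico_le_countIco fun _ h => h
  have hA : (A.card : ℤ) = b - a := by rw [Int.card_Ico, Int.toNat_of_nonneg (by omega)]
  have h0 : (A.filter (· ∈ D)).card = countIco D a b := rfl
  omega

lemma IsDominating.exists_dense_suffix {k : ℤ} (hk : 1 ≤ k) {D : Set ℤ}
    (hD : IsDominating {1, 3 * k + 1} D) (y : ℤ) :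
    ∃ L, 1 ≤ L ∧ L ≤ 6 * k + 1 ∧ (k + 1) * L ≤ (3 * k + 2) * countIco D (y - L) y := by
  by_cases hnear : y - 1 ∈ D ∨ y - 2 ∈ D
  · have : 1 ≤ countIco D (y - 2) y := by
      rcases hnear with h | h <;> exact one_le_countIco h (by omega) (by omega)
    exact ⟨2, by omega, by omega, by nlinarith⟩
  push Not at hnear
  have hfar : y - (3 * k + 2) ∈ D := by
    rcases hD.mem_or_sub_one_mem_or_sub_mem (y - 1) with h | h | h
    · exact absurd h hnear.1
    · exact absurd (by rwa [show y - 1 - 1 = y - 2 by ring] at h) hnear.2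
    · rwa [show y - 1 - (3 * k + 1) = y - (3 * k + 2) by ring] at h
  set μ := countIco D (y - (3 * k + 1)) y
  by_cases hμ : k ≤ μ
  · have hsplit := countIco_add (D := D) (show y - (3 * k + 2) ≤ y - (3 * k + 1) by omega)
      (show y - (3 * k + 1) ≤ y by omega)
    have := one_le_countIco hfar (le_refl _) (show y - (3 * k + 2) < y - (3 * k + 1) by omega)
    exact ⟨3 * k + 2, by omega, by omega, by push_cast [hsplit]; nlinarith⟩
  have hcover := hD.sub_le_countIco (show y - 3 * k ≤ y by omega)
  have h0 : countIco D (y - 3 * k) y ≤ μ := countIco_mono (by omega) le_rfl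
  have h1 : countIco D (y - 3 * k - 1) (y - 1) ≤ μ := countIco_mono (by omega) (by omega)
  have hsplit := countIco_add (D := D) (show y - (6 * k + 1) ≤ y - (3 * k + 1) by omega)
    (show y - (3 * k + 1) ≤ y by omega)
  rw [show y - 3 * k - (3 * k + 1) = y - (6 * k + 1) by ring] at hcover
  refine ⟨6 * k + 1, by omega, le_rfl, ?_⟩
  have : 2 * k + 1 ≤ (countIco D (y - (6 * k + 1)) y : ℤ) := by
    rw [hsplit]; push_cast; omega
  nlinarith

lemma le_countIco_of_forall_exists_suffix {D : Set ℤ} {a b M : ℤ} (ha : 0 ≤ a) (hb : 0 ≤ b)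
    (hsuffix : ∀ y, ∃ L, 1 ≤ L ∧ L ≤ M ∧ a * L ≤ b * countIco D (y - L) y)
    (N : ℕ) (x : ℤ) :
    a * N - a * M ≤ b * countIco D x (x + N) := by
  induction N using Nat.strong_induction_on generalizing x with
  | _ N ih =>
  by_cases hNM : N ≤ M
  · have : 0 ≤ b * countIco D x (x + N) := by positivity
    nlinarith
  obtain ⟨L, hL1, hLM, hL⟩ := hsuffix (x + N)
  lift L to ℕ using by omega
  have hrest := ih (N - L) (by omega) x
  have hsplit := countIco_add (D := D) (show x ≤ x + (N - L : ℕ) by omega)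
    (show x + (N - L : ℕ) ≤ x + N by omega)
  rw [show x + N - L = x + (N - L : ℕ) by push_cast [Nat.cast_sub (by omega : L ≤ N)]; ring]
    at hL
  push_cast [hsplit, Nat.cast_sub (by omega : L ≤ N)] at hrest hL ⊢
  nlinarith

lemma lowerDensity_eq_liminf (D : Set ℤ) :
    lowerDensity D =
      liminf (fun n : ℕ => (countIco D (-n) (n + 1) : ℝ) / (2 * n + 1)) atTop := by
  have hIcc (n : ℕ) : Finset.Icc (-(n : ℤ)) n = Finset.Ico (-(n : ℤ)) (n + 1) := by
    ext; simp only [Finset.mem_Icc, Finset.mem_Ico]; omega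
  simp only [lowerDensity, countIco, hIcc]

lemma tendsto_const_add_div_two_mul_add_one (c C : ℝ) :
    Tendsto (fun n : ℕ => c + C / (2 * n + 1)) atTop (𝓝 c) := by
  have hlin : Tendsto (fun n : ℕ => 2 * (n : ℝ) + 1) atTop atTop :=
    tendsto_atTop_add_const_right _ _ <|
      (tendsto_natCast_atTop_atTop (R := ℝ)).const_mul_atTop two_pos
  simpa using tendsto_const_nhds.add (tendsto_const_nhds (x := C).div_atTop hlin)

section density

variable {D : Set ℤ} {a b C : ℝ}

lemma div_le_lowerDensity_of_le_countIco (hb : 0 < b)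
    (h : ∀ n : ℕ, a * (2 * n + 1) - C ≤ b * countIco D (-n) (n + 1)) :
    a / b ≤ lowerDensity D := by
  have hle (n : ℕ) :
      a / b + (-C / b) / (2 * n + 1) ≤ (countIco D (-n) (n + 1) : ℝ) / (2 * n + 1) := by
    rw [show a / b + (-C / b) / (2 * n + 1) = (a * (2 * n + 1) - C) / (b * (2 * n + 1)) by
      field_simp; ring, div_le_div_iff₀ (by positivity) (by positivity)]
    nlinarith [h n]
  have hratio (n : ℕ) : (countIco D (-n) (n + 1) : ℝ) / (2 * n + 1) ≤ 1 := by
    rw [div_le_one (by positivity)]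
    have := countIco_le (D := D) (-n) (n + 1)
    have h2 : ((n : ℤ) + 1 - -n).toNat = 2 * n + 1 := by omega
    rw [h2] at this
    exact_mod_cast this
  have hlim := tendsto_const_add_div_two_mul_add_one (a / b) (-C / b)
  rw [lowerDensity_eq_liminf, ← hlim.liminf_eq]
  exact liminf_le_liminf (.of_forall hle) hlim.isBoundedUnder_ge
    (isCoboundedUnder_ge_of_le _ hratio)

lemma lowerDensity_le_div_of_countIco_le (hb : 0 < b)
    (h : ∀ n : ℕ, b * countIco D (-n) (n + 1) ≤ a * (2 * n + 1) + C) :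
    lowerDensity D ≤ a / b := by
  have hle (n : ℕ) :
      (countIco D (-n) (n + 1) : ℝ) / (2 * n + 1) ≤ a / b + (C / b) / (2 * n + 1) := by
    rw [show a / b + (C / b) / (2 * n + 1) = (a * (2 * n + 1) + C) / (b * (2 * n + 1)) by
      field_simp, div_le_div_iff₀ (by positivity) (by positivity)]
    nlinarith [h n]
  have hlim := tendsto_const_add_div_two_mul_add_one (a / b) (C / b)
  rw [lowerDensity_eq_liminf, ← hlim.liminf_eq]
  exact liminf_le_liminf (.of_forall hle) (isBoundedUnder_of ⟨0, fun n => by positivity⟩)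
    hlim.isCoboundedUnder_ge

end density

section periodic

variable {D : Set ℤ} {p : ℤ}

lemma countIco_add_period (hD : ∀ m, m + p ∈ D ↔ m ∈ D) (a b : ℤ) :
    countIco D (a + p) (b + p) = countIco D a b := by
  rw [countIco, ← Finset.map_add_right_Ico, Finset.filter_map, Finset.card_map]
  simp only [countIco, Function.comp_def, addRightEmbedding_apply, hD]

lemma countIco_add_one_add_one (hD : ∀ m, m + p ∈ D ↔ m ∈ D) (hp : 0 < p) (a : ℤ) :
    countIco D (a + 1) (a + 1 + p) = countIco D a (a + p) := by
  have h₁ := countIco_add (D := D) (show a ≤ a + 1 by omega) (show a + 1 ≤ a + 1 + p by omega)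
  have h₂ := countIco_add (D := D) (show a ≤ a + p by omega) (show a + p ≤ a + 1 + p by omega)
  have hshift := countIco_add_period hD a (a + 1)
  rw [show a + 1 + p = a + p + 1 by ring] at *
  omega

lemma countIco_eq_countIco_zero (hD : ∀ m, m + p ∈ D ↔ m ∈ D) (hp : 0 < p) (a : ℤ) :
    countIco D a (a + p) = countIco D 0 p := by
  induction a using Int.induction_on with
  | zero => rw [zero_add]
  | succ i ih => rw [countIco_add_one_add_one hD hp, ih]
  | pred i ih => rw [← ih, ← countIco_add_one_add_one hD hp, sub_add_cancel]

lemma mul_countIco_le (hD : ∀ m, m + p ∈ D ↔ m ∈ D) (hp : 0 < p) (N : ℕ) (x : ℤ) :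
    p * countIco D x (x + N) ≤ countIco D 0 p * (N + p) := by
  induction N using Nat.strong_induction_on generalizing x with
  | _ N ih =>
  have hperiod := countIco_eq_countIco_zero hD hp x
  by_cases hNp : N < p
  · have : countIco D x (x + N) ≤ countIco D x (x + p) := countIco_mono le_rfl (by omega)
    nlinarith
  lift p to ℕ using hp.le
  have hrest := ih (N - p) (by omega) (x + p)
  have hsplit := countIco_add (D := D) (show x ≤ x + p by omega)
    (show x + p ≤ x + N by omega)
  push_cast [Nat.cast_sub (show p ≤ N by omega)] at hrest
  rw [show x + p + (N - p) = x + N by ring] at hrest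
  push_cast [hsplit, hperiod]
  nlinarith

end periodic

def threeSpacedResidues (k : ℤ) : Set ℤ :=
  {m | ∃ j t : ℤ, 0 ≤ j ∧ j ≤ k ∧ m = 3 * j + (3 * k + 2) * t}

lemma add_mem_threeSpacedResidues_iff (k m : ℤ) :
    m + (3 * k + 2) ∈ threeSpacedResidues k ↔ m ∈ threeSpacedResidues k := by
  constructor
  · rintro ⟨j, t, hj0, hjk, he⟩
    exact ⟨j, t - 1, hj0, hjk, by linear_combination he⟩
  · rintro ⟨j, t, hj0, hjk, rfl⟩
    exact ⟨j, t + 1, hj0, hjk, by ring⟩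

lemma countIco_threeSpacedResidues {k : ℤ} (hk : 0 ≤ k) :
    countIco (threeSpacedResidues k) 0 (3 * k + 2) = k + 1 := by
  have himage : (Finset.Ico 0 (3 * k + 2)).filter (· ∈ threeSpacedResidues k) =
      (Finset.Icc 0 k).image (3 * ·) := by
    ext m
    simp only [Finset.mem_filter, Finset.mem_Ico, Finset.mem_image, Finset.mem_Icc]
    constructor
    · rintro ⟨⟨hm0, hmp⟩, j, t, hj0, hjk, rfl⟩
      have ht : (3 * k + 2) * t = 0 :=
        Int.eq_zero_of_abs_lt_dvd (dvd_mul_right _ _) (abs_lt.mpr ⟨by omega, by omega⟩)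
      exact ⟨j, ⟨hj0, hjk⟩, by rw [ht, add_zero]⟩
    · rintro ⟨j, ⟨hj0, hjk⟩, rfl⟩
      exact ⟨⟨by omega, by omega⟩, j, 0, hj0, hjk, by ring⟩
  rw [countIco, himage, Finset.card_image_of_injective _ (fun a b h => by omega), Int.card_Icc]
  omega

lemma isDominating_threeSpacedResidues {k : ℤ} (hk : 0 ≤ k) :
    IsDominating {1, 3 * k + 1} (threeSpacedResidues k) := by
  intro v
  have hv := Int.mul_ediv_add_emod v (3 * k + 2)
  have hr0 : 0 ≤ v % (3 * k + 2) := Int.emod_nonneg v (by omega)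
  have hrp : v % (3 * k + 2) < 3 * k + 2 := Int.emod_lt_of_pos v (by omega)
  set r := v % (3 * k + 2)
  set t := v / (3 * k + 2)
  rcases (by omega : r % 3 = 0 ∨ r % 3 = 1 ∨ r % 3 = 2) with h | h | h
  · exact .inl ⟨r / 3, t, by omega, by omega, by omega⟩
  · exact .inr ⟨v - 1, ⟨(r - 1) / 3, t, by omega, by omega, by omega⟩, 1, .inl rfl,
      by ring⟩
  · refine .inr ⟨v - (3 * k + 1), ⟨(r + 1) / 3, t - 1, by omega, by omega, ?_⟩, 3 * k + 1,
      .inr rfl, by ring⟩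
    have hj : 3 * ((r + 1) / 3) = r + 1 := by omega
    linear_combination -hj - hv

lemma lowerDensity_threeSpacedResidues_le {k : ℤ} (hk : 0 ≤ k) :
    lowerDensity (threeSpacedResidues k) ≤ ((k : ℝ) + 1) / (3 * k + 2) := by
  refine lowerDensity_le_div_of_countIco_le (C := (k + 1) * (3 * k + 2)) (by positivity)
    fun n => ?_
  have h := mul_countIco_le (add_mem_threeSpacedResidues_iff k) (by omega) (2 * n + 1) (-n)
  rw [countIco_threeSpacedResidues hk,
    show -(n : ℤ) + (2 * n + 1 : ℕ) = n + 1 by push_cast; ring] at h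
  exact_mod_cast h.trans_eq (by ring)

lemma IsDominating.div_le_lowerDensity {k : ℤ} (hk : 1 ≤ k) {D : Set ℤ}
    (hD : IsDominating {1, 3 * k + 1} D) :
    ((k : ℝ) + 1) / (3 * k + 2) ≤ lowerDensity D := by
  refine div_le_lowerDensity_of_le_countIco (C := (k + 1) * (6 * k + 1)) (by positivity)
    fun n => ?_
  have h := le_countIco_of_forall_exists_suffix (by omega) (by omega)
    (hD.exists_dense_suffix hk) (2 * n + 1) (-n)
  rw [show -(n : ℤ) + (2 * n + 1 : ℕ) = n + 1 by push_cast; ring] at h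
  push_cast at h
  exact_mod_cast h

theorem stmt_16 (k : ℤ) (hk : 1 ≤ k) :
    domRatio {1, 3*k + 1} = ((k:ℝ) + 1) / (3*(k:ℝ) + 2) := by
  have hlower : ∀ x ∈ {x : ℝ | ∃ D, IsDominating {1, 3 * k + 1} D ∧ x = lowerDensity D},
      ((k : ℝ) + 1) / (3 * k + 2) ≤ x := by
    rintro _ ⟨D, hD, rfl⟩
    exact hD.div_le_lowerDensity hk
  have hpattern := isDominating_threeSpacedResidues (show 0 ≤ k by omega)
  apply le_antisymm
  · exact (csInf_le ⟨_, hlower⟩ ⟨_, hpattern, rfl⟩).trans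
      (lowerDensity_threeSpacedResidues_le (by omega))
  · exact le_csInf ⟨_, _, hpattern, rfl⟩ hlower
end
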